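/- The ordered group (E, E₊) satisfies the Riesz interpolation property: writing e ≤ f for f − e ∈ E₊ ∪ {0}, for all a₁, a₂, b₁, b₂ ∈ E with aᵢ ≤ bⱼ for all i, j ∈ {1, 2}, there exists c ∈ E with aᵢ ≤ c ≤ bⱼ for all i, j ∈ {1, 2}. -/

import Mathlib

/-- The additive subgroup `E` of `ℝ × ℤ × ℤ`: all triples `(r, x, y)` such that
`r = (j + k√3)/5^(6i)`, `x ≡ j (mod 9)` and `y ≡ k (mod 3)` for some integers `i, j, k`. -/
def Eset : Set (ℝ × ℤ × ℤ) :=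
  {p | ∃ i j k : ℤ, p.1 = ((j : ℝ) + (k : ℝ) * Real.sqrt 3) / (5 : ℝ) ^ (6 * i) ∧
    p.2.1 ≡ j [ZMOD 9] ∧ p.2.2 ≡ k [ZMOD 3]}

/-- The positive cone `E₊ = {(r, x, y) ∈ E : r > 0} ∪ {(0, 0, 0)}`. -/
def Epos : Set (ℝ × ℤ × ℤ) :=
  {p | p ∈ Eset ∧ 0 < p.1} ∪ {0}

/-- An order automorphism of `(E, E₊)`: an additive group automorphism of `E`
(a bijection of `E` onto itself which is additive on `E`) with `φ(E₊) = E₊`. -/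
structure IsOrderAuto (φ : ℝ × ℤ × ℤ → ℝ × ℤ × ℤ) : Prop where
  bijOn : Set.BijOn φ Eset Eset
  addOn : ∀ p ∈ Eset, ∀ q ∈ Eset, φ (p + q) = φ p + φ q
  posEq : φ '' Epos = Epos

/- The ordering of `E` only sees the real coordinate: `e ≤ f` iff `e = f` or `e.1 < f.1`.
Elements `(j / 5^(6n), j, 0)` of `E` have real coordinates dense in `ℝ`, so when no `aᵢ`
equals a `bⱼ` some such element lies strictly between `max aᵢ.1` and `min bⱼ.1`; when
`aᵢ = bⱼ`, `c = aᵢ` works. -/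

def IsERep (p : ℝ × ℤ × ℤ) (i j k : ℤ) : Prop :=
  p.1 = ((j : ℝ) + (k : ℝ) * Real.sqrt 3) / (5 : ℝ) ^ (6 * i) ∧
    p.2.1 ≡ j [ZMOD 9] ∧ p.2.2 ≡ k [ZMOD 3]

namespace IsERep

variable {p q : ℝ × ℤ × ℤ} {i j k j' k' : ℤ}

theorem mem_Eset (h : IsERep p i j k) : p ∈ Eset := ⟨i, j, k, h⟩

theorem sub (hp : IsERep p i j k) (hq : IsERep q i j' k') :
    IsERep (p - q) i (j - j') (k - k') := by
  obtain ⟨hp₁, hp₂, hp₃⟩ := hp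
  obtain ⟨hq₁, hq₂, hq₃⟩ := hq
  refine ⟨?_, hp₂.sub hq₂, hp₃.sub hq₃⟩
  rw [Prod.fst_sub, hp₁, hq₁]
  push_cast
  ring

theorem shift (h : IsERep p i j k) (t : ℕ) :
    IsERep p (i + t) (j * 5 ^ (6 * t)) (k * 5 ^ (6 * t)) := by
  obtain ⟨h₁, h₂, h₃⟩ := h
  have hmod9 : (5 : ℤ) ^ (6 * t) ≡ 1 [ZMOD 9] := by
    simpa [pow_mul] using (show (5 : ℤ) ^ 6 ≡ 1 [ZMOD 9] by decide).pow t
  have hmod3 : (5 : ℤ) ^ (6 * t) ≡ 1 [ZMOD 3] := hmod9.of_mul_left 3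
  refine ⟨?_, h₂.trans (by simpa using (hmod9.mul_left j).symm),
    h₃.trans (by simpa using (hmod3.mul_left k).symm)⟩
  have hden : (5 : ℝ) ^ (6 * (i + t)) = (5 : ℝ) ^ (6 * i) * (5 : ℝ) ^ (6 * t) := by
    rw [mul_add, zpow_add₀ (by norm_num), zpow_mul _ 6 (t : ℤ)]
    norm_cast
    rw [pow_mul]
  rw [h₁, hden]
  field_simp
  push_cast
  ring

end IsERep

theorem Eset_sub_mem {p q : ℝ × ℤ × ℤ} (hp : p ∈ Eset) (hq : q ∈ Eset) : p - q ∈ Eset := by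
  obtain ⟨i, j, k, hp⟩ : ∃ i j k, IsERep p i j k := hp
  obtain ⟨i', j', k', hq⟩ : ∃ i j k, IsERep q i j k := hq
  obtain ⟨t, ht⟩ := Int.le.dest (le_max_left i i')
  obtain ⟨t', ht'⟩ := Int.le.dest (le_max_right i i')
  have hp' := hp.shift t
  have hq' := hq.shift t'
  rw [ht] at hp'
  rw [ht'] at hq'
  exact (hp'.sub hq').mem_Eset

theorem mem_Epos_iff {p : ℝ × ℤ × ℤ} (hp : p ∈ Eset) : p ∈ Epos ↔ p = 0 ∨ 0 < p.1 := by
  simp only [Epos, Set.mem_union, Set.mem_ofPred_eq, Set.mem_singleton_iff, hp, true_and]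
  tauto

theorem sub_mem_Epos_iff {a b : ℝ × ℤ × ℤ} (ha : a ∈ Eset) (hb : b ∈ Eset) :
    b - a ∈ Epos ↔ a = b ∨ a.1 < b.1 := by
  rw [mem_Epos_iff (Eset_sub_mem hb ha), sub_eq_zero, eq_comm, Prod.fst_sub, sub_pos]

theorem exists_mem_Eset_fst_mem_Ioo {x y : ℝ} (h : x < y) :
    ∃ c ∈ Eset, c.1 ∈ Set.Ioo x y := by
  obtain ⟨n, hn⟩ := pow_unbounded_of_one_lt (y - x)⁻¹ (by norm_num : (1 : ℝ) < 5 ^ 6)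
  obtain ⟨z, hz⟩ := exists_div_btwn (n := (5 ^ 6) ^ n) h (by exact_mod_cast hn)
  refine ⟨((z : ℝ) / (5 : ℝ) ^ (6 * (n : ℤ)), z, 0), ⟨n, z, 0, by simp, .refl _, .refl _⟩, ?_⟩
  have hden : ((((5 ^ 6) ^ n : ℕ)) : ℝ) = (5 : ℝ) ^ (6 * (n : ℤ)) := by
    rw [zpow_mul]
    norm_cast
  rwa [← hden]

/-- The ordered group `(E, E₊)` has the Riesz interpolation property: writing `e ≤ f`
for `f − e ∈ E₊` (note `0 ∈ E₊`), whenever `a₁, a₂ ≤ b₁, b₂` in `E` there is `c ∈ E`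
with `a₁, a₂ ≤ c ≤ b₁, b₂`. -/
theorem stmt_19 (a₁ a₂ b₁ b₂ : ℝ × ℤ × ℤ)
    (ha₁ : a₁ ∈ Eset) (ha₂ : a₂ ∈ Eset) (hb₁ : b₁ ∈ Eset) (hb₂ : b₂ ∈ Eset)
    (h11 : b₁ - a₁ ∈ Epos) (h12 : b₂ - a₁ ∈ Epos)
    (h21 : b₁ - a₂ ∈ Epos) (h22 : b₂ - a₂ ∈ Epos) :
    ∃ c ∈ Eset, (c - a₁ ∈ Epos) ∧ (c - a₂ ∈ Epos) ∧
      (b₁ - c ∈ Epos) ∧ (b₂ - c ∈ Epos) := by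
  by_cases heq : a₁ = b₁ ∨ a₁ = b₂ ∨ a₂ = b₁ ∨ a₂ = b₂
  · have hrefl (a : ℝ × ℤ × ℤ) : a - a ∈ Epos := Or.inr (sub_self a)
    rcases heq with rfl | rfl | rfl | rfl
    exacts [⟨a₁, ha₁, hrefl _, h21, hrefl _, h12⟩, ⟨a₁, ha₁, hrefl _, h22, h11, hrefl _⟩,
      ⟨a₂, ha₂, h11, hrefl _, hrefl _, h22⟩, ⟨a₂, ha₂, h12, hrefl _, h21, hrefl _⟩]
  push Not at heq
  simp only [sub_mem_Epos_iff, *, false_or] at h11 h12 h21 h22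
  obtain ⟨c, hc, hac, hcb⟩ := exists_mem_Eset_fst_mem_Ioo
    (max_lt (lt_min h11 h12) (lt_min h21 h22))
  refine ⟨c, hc, ?_⟩
  simp only [sub_mem_Epos_iff, *]
  simp only [max_lt_iff, lt_min_iff] at hac hcb
  tauto
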